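/- arXiv:1102.5287 — 7 statements merged into one kernel-verified Lean document; each statement's English description precedes it below -/
import Mathlib

section
/- Let 𝓔 be an 𝓕-expectation, let t ∈ [0,T], and let η₁, η₂ ∈ L²(𝓕_t). If 𝓔(η₁ 1_A) = 𝓔(η₂ 1_A) for every A ∈ 𝓕_t, then η₁ = η₂ ℙ-almost surely. -/
open MeasureTheory Filter Set

theorem ae_eq_on_of_indicator_eq_of_strict
    {Ω : Type*} {m0 : MeasurableSpace Ω} {ℙ : Measure Ω} {p : ENNReal} {𝓔 : (Ω → ℝ) → ℝ}
    (hstrict : ∀ Q Q' : Ω → ℝ, MemLp Q p ℙ → MemLp Q' p ℙ →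
      (∀ᵐ ω ∂ℙ, Q' ω ≤ Q ω) → 𝓔 Q = 𝓔 Q' → Q =ᵐ[ℙ] Q')
    {f g : Ω → ℝ} (hf : MemLp f p ℙ) (hg : MemLp g p ℙ) {A : Set Ω} (hA : MeasurableSet A)
    (hle : ∀ ω ∈ A, g ω ≤ f ω) (heq : 𝓔 (A.indicator f) = 𝓔 (A.indicator g)) :
    ∀ᵐ ω ∂ℙ, ω ∈ A → f ω = g ω := by
  have hind : A.indicator f =ᵐ[ℙ] A.indicator g :=
    hstrict _ _ (hf.indicator hA) (hg.indicator hA)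
      (.of_forall fun ω ↦ indicator_le_indicator' (hle ω)) heq
  filter_upwards [hind] with ω hω hωA
  simpa only [indicator_of_mem hωA] using hω

theorem stmt0_general
    {Ω : Type*} {m0 : MeasurableSpace Ω} (ℙ : Measure Ω)
    (ℱ : ℝ → MeasurableSpace Ω)
    (hℱle : ∀ t : ℝ, ℱ t ≤ m0)
    (𝓔 : (Ω → ℝ) → ℝ)
    -- strict monotonicity
    (hstrict : ∀ Q Q' : Ω → ℝ, MemLp Q 2 ℙ → MemLp Q' 2 ℙ →
      (∀ᵐ ω ∂ℙ, Q' ω ≤ Q ω) → 𝓔 Q = 𝓔 Q' → Q =ᵐ[ℙ] Q')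
    -- the statement
    (t : ℝ)
    (η₁ η₂ : Ω → ℝ)
    (hη₁ : MemLp η₁ 2 ℙ) (hη₁m : Measurable[ℱ t] η₁)
    (hη₂ : MemLp η₂ 2 ℙ) (hη₂m : Measurable[ℱ t] η₂)
    (h : ∀ A : Set Ω, MeasurableSet[ℱ t] A → 𝓔 (A.indicator η₁) = 𝓔 (A.indicator η₂)) :
    η₁ =ᵐ[ℙ] η₂ := by
  have h₁₂ : MeasurableSet[ℱ t] {ω | η₂ ω ≤ η₁ ω} := measurableSet_le hη₂m hη₁m
  have h₂₁ : MeasurableSet[ℱ t] {ω | η₁ ω ≤ η₂ ω} := measurableSet_le hη₁m hη₂m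
  have on₁₂ := ae_eq_on_of_indicator_eq_of_strict hstrict hη₁ hη₂ (hℱle t _ h₁₂)
    (fun _ hω ↦ hω) (h _ h₁₂)
  have on₂₁ := ae_eq_on_of_indicator_eq_of_strict hstrict hη₂ hη₁ (hℱle t _ h₂₁)
    (fun _ hω ↦ hω) (h _ h₂₁).symm
  filter_upwards [on₁₂, on₂₁] with ω hω₁₂ hω₂₁
  rcases le_total (η₂ ω) (η₁ ω) with hle | hle
  exacts [hω₁₂ hle, (hω₂₁ hle).symm]

/-- **Uniqueness of the conditional 𝓕-expectation.**
If `𝓔` is an 𝓕-expectation, `t ∈ [0,T]`, and `η₁, η₂ ∈ L²(𝓕_t)` satisfy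
`𝓔(η₁ 1_A) = 𝓔(η₂ 1_A)` for every `A ∈ 𝓕_t`, then `η₁ = η₂` ℙ-a.s. -/
theorem stmt0
    {Ω : Type*} {m0 : MeasurableSpace Ω} (ℙ : Measure Ω) [IsProbabilityMeasure ℙ]
    (T : ℝ) (hT : 0 < T)
    (ℱ : ℝ → MeasurableSpace Ω)
    (hℱmono : ∀ s t : ℝ, s ≤ t → ℱ s ≤ ℱ t)
    (hℱle : ∀ t : ℝ, ℱ t ≤ m0)
    (𝓔 : (Ω → ℝ) → ℝ)
    -- strict monotonicity
    (hmono : ∀ Q Q' : Ω → ℝ, MemLp Q 2 ℙ → MemLp Q' 2 ℙ →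
      (∀ᵐ ω ∂ℙ, Q' ω ≤ Q ω) → 𝓔 Q' ≤ 𝓔 Q)
    (hstrict : ∀ Q Q' : Ω → ℝ, MemLp Q 2 ℙ → MemLp Q' 2 ℙ →
      (∀ᵐ ω ∂ℙ, Q' ω ≤ Q ω) → 𝓔 Q = 𝓔 Q' → Q =ᵐ[ℙ] Q')
    -- preservation of constants
    (hconst : ∀ c : ℝ, 𝓔 (fun _ => c) = c)
    -- filtration consistency
    (hF : ∀ Q : Ω → ℝ, MemLp Q 2 ℙ → Measurable[ℱ T] Q →
      ∀ t ∈ Set.Icc (0:ℝ) T, ∃ η : Ω → ℝ, MemLp η 2 ℙ ∧ Measurable[ℱ t] η ∧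
        ∀ A : Set Ω, MeasurableSet[ℱ t] A → 𝓔 (A.indicator Q) = 𝓔 (A.indicator η))
    -- the statement
    (t : ℝ) (ht : t ∈ Set.Icc (0:ℝ) T)
    (η₁ η₂ : Ω → ℝ)
    (hη₁ : MemLp η₁ 2 ℙ) (hη₁m : Measurable[ℱ t] η₁)
    (hη₂ : MemLp η₂ 2 ℙ) (hη₂m : Measurable[ℱ t] η₂)
    (h : ∀ A : Set Ω, MeasurableSet[ℱ t] A → 𝓔 (A.indicator η₁) = 𝓔 (A.indicator η₂)) :
    η₁ =ᵐ[ℙ] η₂ :=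
  stmt0_general ℙ ℱ hℱle 𝓔 hstrict t η₁ η₂ hη₁ hη₁m hη₂ hη₂m h
end

section
/- Let 𝓔 be an 𝓕-expectation. For every Q ∈ L²(𝓕_T), every t ∈ [0,T] and every A ∈ 𝓕_t, one has 𝓔(Q 1_A|𝓕_t) = 1_A 𝓔(Q|𝓕_t) ℙ-almost surely. -/
open MeasureTheory Filter Set

/-! If `𝓔` is strictly monotone on `L²`, two `m`-measurable `L²` functions `f`, `g` with
`𝓔 (1_B f) = 𝓔 (1_B g)` for every `B ∈ m` agree a.e.: on `B = {g < f}` we have `1_B g ≤ 1_B f`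
with equal values of `𝓔`, so strictness forces `ℙ B = 0`. For `Q` and `A ∈ 𝓕_t` the functions
`𝓔(1_A Q | 𝓕_t)` and `1_A 𝓔(Q | 𝓕_t)` satisfy this test, since `1_B 1_A = 1_{B ∩ A}` with
`B ∩ A ∈ 𝓕_t`. -/

section StrictlyMonotone

variable {Ω : Type*} {m m0 : MeasurableSpace Ω} {ℙ : Measure Ω} {𝓔 : (Ω → ℝ) → ℝ}

theorem ae_le_of_forall_indicator_eq
    (hstrict : ∀ Q Q' : Ω → ℝ, MemLp Q 2 ℙ → MemLp Q' 2 ℙ →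
      (∀ᵐ ω ∂ℙ, Q' ω ≤ Q ω) → 𝓔 Q = 𝓔 Q' → Q =ᵐ[ℙ] Q')
    (hm : m ≤ m0) {f g : Ω → ℝ} (hf : MemLp f 2 ℙ) (hg : MemLp g 2 ℙ)
    (hfm : Measurable[m] f) (hgm : Measurable[m] g)
    (hfg : ∀ B : Set Ω, MeasurableSet[m] B → 𝓔 (B.indicator f) = 𝓔 (B.indicator g)) :
    ∀ᵐ ω ∂ℙ, f ω ≤ g ω := by
  set B := {ω | g ω < f ω}
  have hB : MeasurableSet[m] B := measurableSet_lt hgm hfm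
  have hle : ∀ ω, B.indicator g ω ≤ B.indicator f ω := fun ω =>
    indicator_le_indicator' fun hω => le_of_lt hω
  have hBeq : B.indicator f =ᵐ[ℙ] B.indicator g :=
    hstrict _ _ (hf.indicator (hm _ hB)) (hg.indicator (hm _ hB)) (ae_of_all _ hle) (hfg B hB)
  filter_upwards [hBeq] with ω hω
  by_contra hlt
  have hωB : ω ∈ B := lt_of_not_ge hlt
  rw [indicator_of_mem hωB, indicator_of_mem hωB] at hω
  exact hωB.ne hω.symm

theorem ae_eq_of_forall_indicator_eq
    (hstrict : ∀ Q Q' : Ω → ℝ, MemLp Q 2 ℙ → MemLp Q' 2 ℙ →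
      (∀ᵐ ω ∂ℙ, Q' ω ≤ Q ω) → 𝓔 Q = 𝓔 Q' → Q =ᵐ[ℙ] Q')
    (hm : m ≤ m0) {f g : Ω → ℝ} (hf : MemLp f 2 ℙ) (hg : MemLp g 2 ℙ)
    (hfm : Measurable[m] f) (hgm : Measurable[m] g)
    (hfg : ∀ B : Set Ω, MeasurableSet[m] B → 𝓔 (B.indicator f) = 𝓔 (B.indicator g)) :
    f =ᵐ[ℙ] g := by
  filter_upwards [ae_le_of_forall_indicator_eq hstrict hm hf hg hfm hgm hfg,
    ae_le_of_forall_indicator_eq hstrict hm hg hf hgm hfm fun B hB => (hfg B hB).symm]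
    with ω hfg hgf
  exact le_antisymm hfg hgf

end StrictlyMonotone

theorem stmt2_general
    {Ω : Type*} {m0 : MeasurableSpace Ω} (ℙ : Measure Ω)
    (T : ℝ)
    (ℱ : ℝ → MeasurableSpace Ω)
    (hℱle : ∀ t : ℝ, ℱ t ≤ m0)
    (𝓔 : (Ω → ℝ) → ℝ)
    -- strict monotonicity
    (hstrict : ∀ Q Q' : Ω → ℝ, MemLp Q 2 ℙ → MemLp Q' 2 ℙ →
      (∀ᵐ ω ∂ℙ, Q' ω ≤ Q ω) → 𝓔 Q = 𝓔 Q' → Q =ᵐ[ℙ] Q')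
    -- the conditional 𝓕-expectation `condE Q t = 𝓔(Q|𝓕_t)` and its defining properties
    (condE : (Ω → ℝ) → ℝ → Ω → ℝ)
    (hcondL2 : ∀ Q : Ω → ℝ, MemLp Q 2 ℙ → ∀ t ∈ Set.Icc (0:ℝ) T, MemLp (condE Q t) 2 ℙ)
    (hcondMeas : ∀ Q : Ω → ℝ, MemLp Q 2 ℙ → ∀ t ∈ Set.Icc (0:ℝ) T,
      Measurable[ℱ t] (condE Q t))
    (hcondEq : ∀ Q : Ω → ℝ, MemLp Q 2 ℙ → ∀ t ∈ Set.Icc (0:ℝ) T,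
      ∀ A : Set Ω, MeasurableSet[ℱ t] A → 𝓔 (A.indicator Q) = 𝓔 (A.indicator (condE Q t)))
    -- the statement
    (Q : Ω → ℝ) (hQ : MemLp Q 2 ℙ)
    (t : ℝ) (ht : t ∈ Set.Icc (0:ℝ) T)
    (A : Set Ω) (hA : MeasurableSet[ℱ t] A) :
    condE (A.indicator Q) t =ᵐ[ℙ] A.indicator (condE Q t) := by
  have hAQ : MemLp (A.indicator Q) 2 ℙ := hQ.indicator (hℱle t _ hA)
  refine ae_eq_of_forall_indicator_eq hstrict (hℱle t) (hcondL2 _ hAQ t ht)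
    ((hcondL2 _ hQ t ht).indicator (hℱle t _ hA)) (hcondMeas _ hAQ t ht)
    ((hcondMeas _ hQ t ht).indicator hA) fun B hB => ?_
  calc 𝓔 (B.indicator (condE (A.indicator Q) t))
      = 𝓔 ((B ∩ A).indicator Q) := by rw [← hcondEq _ hAQ t ht B hB, indicator_indicator]
    _ = 𝓔 ((B ∩ A).indicator (condE Q t)) := hcondEq Q hQ t ht _ (hB.inter hA)
    _ = 𝓔 (B.indicator (A.indicator (condE Q t))) := by rw [indicator_indicator]

/-- For an 𝓕-expectation, `𝓔(Q 1_A | 𝓕_t) = 1_A 𝓔(Q|𝓕_t)` ℙ-a.s. for every `A ∈ 𝓕_t`. -/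
theorem stmt2
    {Ω : Type*} {m0 : MeasurableSpace Ω} (ℙ : Measure Ω) [IsProbabilityMeasure ℙ]
    (T : ℝ) (hT : 0 < T)
    (ℱ : ℝ → MeasurableSpace Ω)
    (hℱmono : ∀ s t : ℝ, s ≤ t → ℱ s ≤ ℱ t)
    (hℱle : ∀ t : ℝ, ℱ t ≤ m0)
    (𝓔 : (Ω → ℝ) → ℝ)
    -- strict monotonicity
    (hmono : ∀ Q Q' : Ω → ℝ, MemLp Q 2 ℙ → MemLp Q' 2 ℙ →
      (∀ᵐ ω ∂ℙ, Q' ω ≤ Q ω) → 𝓔 Q' ≤ 𝓔 Q)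
    (hstrict : ∀ Q Q' : Ω → ℝ, MemLp Q 2 ℙ → MemLp Q' 2 ℙ →
      (∀ᵐ ω ∂ℙ, Q' ω ≤ Q ω) → 𝓔 Q = 𝓔 Q' → Q =ᵐ[ℙ] Q')
    -- preservation of constants
    (hconst : ∀ c : ℝ, 𝓔 (fun _ => c) = c)
    -- the conditional 𝓕-expectation `condE Q t = 𝓔(Q|𝓕_t)` and its defining properties
    (condE : (Ω → ℝ) → ℝ → Ω → ℝ)
    (hcondL2 : ∀ Q : Ω → ℝ, MemLp Q 2 ℙ → ∀ t ∈ Set.Icc (0:ℝ) T, MemLp (condE Q t) 2 ℙ)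
    (hcondMeas : ∀ Q : Ω → ℝ, MemLp Q 2 ℙ → ∀ t ∈ Set.Icc (0:ℝ) T,
      Measurable[ℱ t] (condE Q t))
    (hcondEq : ∀ Q : Ω → ℝ, MemLp Q 2 ℙ → ∀ t ∈ Set.Icc (0:ℝ) T,
      ∀ A : Set Ω, MeasurableSet[ℱ t] A → 𝓔 (A.indicator Q) = 𝓔 (A.indicator (condE Q t)))
    -- the statement
    (Q : Ω → ℝ) (hQ : MemLp Q 2 ℙ) (hQm : Measurable[ℱ T] Q)
    (t : ℝ) (ht : t ∈ Set.Icc (0:ℝ) T)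
    (A : Set Ω) (hA : MeasurableSet[ℱ t] A) :
    condE (A.indicator Q) t =ᵐ[ℙ] A.indicator (condE Q t) :=
  stmt2_general ℙ T ℱ hℱle 𝓔 hstrict condE hcondL2 hcondMeas hcondEq Q hQ t ht A hA
end

section
/- Let 𝓔 be an 𝓕-expectation. For every Q, Q' ∈ L²(𝓕_T), every t ∈ [0,T] and every A ∈ 𝓕_t, one has 𝓔(Q 1_A + Q' 1_{A^c}|𝓕_t) = 𝓔(Q 1_A|𝓕_t) + 𝓔(Q' 1_{A^c}|𝓕_t) ℙ-almost surely. -/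
open MeasureTheory Filter Set

/-!
A version `η` of `𝓔(Q|𝓕_t)` is unique a.e. by strict monotonicity: the integrands
`1_{η' < η} η ≥ 1_{η' < η} η'` have the same `𝓔`, hence agree a.s., so `{η' < η}` is null.
Restricting a version of `𝓔(S|𝓕_t)` to an `𝓕_t`-set `A` gives a version of `𝓔(1_A S|𝓕_t)`.
For `S = Q 1_A + Q' 1_{Aᶜ}` this identifies `1_A 𝓔(S|𝓕_t)` with `𝓔(Q 1_A|𝓕_t)` and
`1_{Aᶜ} 𝓔(S|𝓕_t)` with `𝓔(Q' 1_{Aᶜ}|𝓕_t)`; adding the two gives the claim.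
-/

namespace NonlinearExpectation

def IsCondExpectation {Ω : Type*} {m0 : MeasurableSpace Ω} (ℙ : Measure Ω) (p : ENNReal) (m : MeasurableSpace Ω)
    (𝓔 : (Ω → ℝ) → ℝ) (Q η : Ω → ℝ) : Prop :=
  MemLp η p ℙ ∧ Measurable[m] η ∧
    ∀ B : Set Ω, MeasurableSet[m] B → 𝓔 (B.indicator Q) = 𝓔 (B.indicator η)

variable {Ω : Type*} {m m0 : MeasurableSpace Ω} {ℙ : Measure Ω} {p : ENNReal}
  {𝓔 : (Ω → ℝ) → ℝ}

theorem ae_le_of_forall_indicator_eq (hm : m ≤ m0)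
    (hstrict : ∀ Q Q' : Ω → ℝ, MemLp Q p ℙ → MemLp Q' p ℙ →
      (∀ᵐ ω ∂ℙ, Q' ω ≤ Q ω) → 𝓔 Q = 𝓔 Q' → Q =ᵐ[ℙ] Q')
    {f g : Ω → ℝ} (hf : MemLp f p ℙ) (hg : MemLp g p ℙ)
    (hfm : Measurable[m] f) (hgm : Measurable[m] g)
    (hfg : ∀ B : Set Ω, MeasurableSet[m] B → 𝓔 (B.indicator f) = 𝓔 (B.indicator g)) :
    ∀ᵐ ω ∂ℙ, f ω ≤ g ω := by
  set B : Set Ω := {ω | g ω < f ω}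
  have hB : MeasurableSet[m] B := measurableSet_lt hgm hfm
  have hle : ∀ᵐ ω ∂ℙ, B.indicator g ω ≤ B.indicator f ω :=
    ae_of_all _ fun ω => by
      by_cases hω : ω ∈ B
      · simpa [hω] using le_of_lt hω
      · simp [hω]
  have heq : B.indicator f =ᵐ[ℙ] B.indicator g :=
    hstrict _ _ (hf.indicator (hm _ hB)) (hg.indicator (hm _ hB)) hle (hfg B hB)
  filter_upwards [heq] with ω hω
  by_contra hlt
  have hω' : ω ∈ B := not_le.1 hlt
  simp only [indicator_of_mem hω'] at hω
  exact hlt hω.le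

namespace IsCondExpectation

theorem ae_eq (hm : m ≤ m0)
    (hstrict : ∀ Q Q' : Ω → ℝ, MemLp Q p ℙ → MemLp Q' p ℙ →
      (∀ᵐ ω ∂ℙ, Q' ω ≤ Q ω) → 𝓔 Q = 𝓔 Q' → Q =ᵐ[ℙ] Q')
    {Q η η' : Ω → ℝ} (hη : IsCondExpectation ℙ p m 𝓔 Q η)
    (hη' : IsCondExpectation ℙ p m 𝓔 Q η') : η =ᵐ[ℙ] η' := by
  obtain ⟨hηL, hηm, hηE⟩ := hη
  obtain ⟨hη'L, hη'm, hη'E⟩ := hη'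
  have hE : ∀ B, MeasurableSet[m] B → 𝓔 (B.indicator η) = 𝓔 (B.indicator η') :=
    fun B hB => (hηE B hB).symm.trans (hη'E B hB)
  have hle := ae_le_of_forall_indicator_eq hm hstrict hηL hη'L hηm hη'm hE
  have hge := ae_le_of_forall_indicator_eq hm hstrict hη'L hηL hη'm hηm
    fun B hB => (hE B hB).symm
  filter_upwards [hle, hge] with ω h₁ h₂
  exact le_antisymm h₁ h₂

theorem indicator (hm : m ≤ m0) {Q η : Ω → ℝ} (hη : IsCondExpectation ℙ p m 𝓔 Q η)
    {C : Set Ω} (hC : MeasurableSet[m] C) :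
    IsCondExpectation ℙ p m 𝓔 (C.indicator Q) (C.indicator η) := by
  obtain ⟨hηL, hηm, hηE⟩ := hη
  refine ⟨hηL.indicator (hm _ hC), hηm.indicator hC, fun B hB => ?_⟩
  simp only [indicator_indicator]
  exact hηE _ (hB.inter hC)

end IsCondExpectation

end NonlinearExpectation

open NonlinearExpectation

theorem stmt3_general
    {Ω : Type*} {m0 : MeasurableSpace Ω} (ℙ : Measure Ω)
    (T : ℝ)
    (ℱ : ℝ → MeasurableSpace Ω)
    (hℱle : ∀ t : ℝ, ℱ t ≤ m0)
    (𝓔 : (Ω → ℝ) → ℝ)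
    -- strict monotonicity
    (hstrict : ∀ Q Q' : Ω → ℝ, MemLp Q 2 ℙ → MemLp Q' 2 ℙ →
      (∀ᵐ ω ∂ℙ, Q' ω ≤ Q ω) → 𝓔 Q = 𝓔 Q' → Q =ᵐ[ℙ] Q')
    -- the conditional 𝓕-expectation `condE Q t = 𝓔(Q|𝓕_t)` and its defining properties
    (condE : (Ω → ℝ) → ℝ → Ω → ℝ)
    (hcondL2 : ∀ Q : Ω → ℝ, MemLp Q 2 ℙ → ∀ t ∈ Set.Icc (0:ℝ) T, MemLp (condE Q t) 2 ℙ)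
    (hcondMeas : ∀ Q : Ω → ℝ, MemLp Q 2 ℙ → ∀ t ∈ Set.Icc (0:ℝ) T,
      Measurable[ℱ t] (condE Q t))
    (hcondEq : ∀ Q : Ω → ℝ, MemLp Q 2 ℙ → ∀ t ∈ Set.Icc (0:ℝ) T,
      ∀ A : Set Ω, MeasurableSet[ℱ t] A → 𝓔 (A.indicator Q) = 𝓔 (A.indicator (condE Q t)))
    -- the statement
    (Q Q' : Ω → ℝ) (hQ : MemLp Q 2 ℙ)
    (hQ' : MemLp Q' 2 ℙ)
    (t : ℝ) (ht : t ∈ Set.Icc (0:ℝ) T)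
    (A : Set Ω) (hA : MeasurableSet[ℱ t] A) :
    condE (fun ω => A.indicator Q ω + Aᶜ.indicator Q' ω) t =ᵐ[ℙ]
      fun ω => condE (A.indicator Q) t ω + condE (Aᶜ.indicator Q') t ω := by
  have hcond : ∀ R, MemLp R 2 ℙ → IsCondExpectation ℙ 2 (ℱ t) 𝓔 R (condE R t) :=
    fun R hR => ⟨hcondL2 R hR t ht, hcondMeas R hR t ht, hcondEq R hR t ht⟩
  have hAm : MeasurableSet A := hℱle t _ hA
  set S : Ω → ℝ := fun ω => A.indicator Q ω + Aᶜ.indicator Q' ω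
  have hS : MemLp S 2 ℙ := (hQ.indicator hAm).add (hQ'.indicator hAm.compl)
  have hSA : A.indicator S = A.indicator Q := by
    ext ω; by_cases hω : ω ∈ A <;> simp [S, hω]
  have hSAc : Aᶜ.indicator S = Aᶜ.indicator Q' := by
    ext ω; by_cases hω : ω ∈ A <;> simp [S, hω]
  have hOnA : A.indicator (condE S t) =ᵐ[ℙ] condE (A.indicator Q) t := by
    have h := (hcond S hS).indicator (hℱle t) hA
    rw [hSA] at h
    exact h.ae_eq (hℱle t) hstrict (hcond _ (hQ.indicator hAm))
  have hOnAc : Aᶜ.indicator (condE S t) =ᵐ[ℙ] condE (Aᶜ.indicator Q') t := by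
    have h := (hcond S hS).indicator (hℱle t) hA.compl
    rw [hSAc] at h
    exact h.ae_eq (hℱle t) hstrict (hcond _ (hQ'.indicator hAm.compl))
  filter_upwards [hOnA, hOnAc] with ω h₁ h₂
  rw [← h₁, ← h₂, indicator_self_add_compl_apply]

/-- For an 𝓕-expectation, `𝓔(Q 1_A + Q' 1_{Aᶜ} | 𝓕_t) = 𝓔(Q 1_A|𝓕_t) + 𝓔(Q' 1_{Aᶜ}|𝓕_t)` a.s. -/
theorem stmt3
    {Ω : Type*} {m0 : MeasurableSpace Ω} (ℙ : Measure Ω) [IsProbabilityMeasure ℙ]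
    (T : ℝ) (hT : 0 < T)
    (ℱ : ℝ → MeasurableSpace Ω)
    (hℱmono : ∀ s t : ℝ, s ≤ t → ℱ s ≤ ℱ t)
    (hℱle : ∀ t : ℝ, ℱ t ≤ m0)
    (𝓔 : (Ω → ℝ) → ℝ)
    -- strict monotonicity
    (hmono : ∀ Q Q' : Ω → ℝ, MemLp Q 2 ℙ → MemLp Q' 2 ℙ →
      (∀ᵐ ω ∂ℙ, Q' ω ≤ Q ω) → 𝓔 Q' ≤ 𝓔 Q)
    (hstrict : ∀ Q Q' : Ω → ℝ, MemLp Q 2 ℙ → MemLp Q' 2 ℙ →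
      (∀ᵐ ω ∂ℙ, Q' ω ≤ Q ω) → 𝓔 Q = 𝓔 Q' → Q =ᵐ[ℙ] Q')
    -- preservation of constants
    (hconst : ∀ c : ℝ, 𝓔 (fun _ => c) = c)
    -- the conditional 𝓕-expectation `condE Q t = 𝓔(Q|𝓕_t)` and its defining properties
    (condE : (Ω → ℝ) → ℝ → Ω → ℝ)
    (hcondL2 : ∀ Q : Ω → ℝ, MemLp Q 2 ℙ → ∀ t ∈ Set.Icc (0:ℝ) T, MemLp (condE Q t) 2 ℙ)
    (hcondMeas : ∀ Q : Ω → ℝ, MemLp Q 2 ℙ → ∀ t ∈ Set.Icc (0:ℝ) T,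
      Measurable[ℱ t] (condE Q t))
    (hcondEq : ∀ Q : Ω → ℝ, MemLp Q 2 ℙ → ∀ t ∈ Set.Icc (0:ℝ) T,
      ∀ A : Set Ω, MeasurableSet[ℱ t] A → 𝓔 (A.indicator Q) = 𝓔 (A.indicator (condE Q t)))
    -- the statement
    (Q Q' : Ω → ℝ) (hQ : MemLp Q 2 ℙ) (hQm : Measurable[ℱ T] Q)
    (hQ' : MemLp Q' 2 ℙ) (hQ'm : Measurable[ℱ T] Q')
    (t : ℝ) (ht : t ∈ Set.Icc (0:ℝ) T)
    (A : Set Ω) (hA : MeasurableSet[ℱ t] A) :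
    condE (fun ω => A.indicator Q ω + Aᶜ.indicator Q' ω) t =ᵐ[ℙ]
      fun ω => condE (A.indicator Q) t ω + condE (Aᶜ.indicator Q') t ω :=
  stmt3_general ℙ T ℱ hℱle 𝓔 hstrict condE hcondL2 hcondMeas hcondEq Q Q' hQ hQ' t ht A hA
end

section
/- Let 𝓔 be an 𝓕-expectation and let Q, Q' ∈ L²(𝓕_T) with Q ≥ Q' ℙ-a.s. Then for every t ∈ [0,T], 𝓔(Q|𝓕_t) ≥ 𝓔(Q'|𝓕_t) ℙ-almost surely; if moreover 𝓔(Q|𝓕_t) = 𝓔(Q'|𝓕_t) ℙ-a.s. for some t ∈ [0,T], then Q = Q' ℙ-almost surely. -/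
open MeasureTheory Filter Set

/-! On the `ℱ t`-measurable set `A = {𝓔(Q|ℱ t) < 𝓔(Q'|ℱ t)}` the defining property of the
conditional 𝓕-expectation turns `𝓔(1_A Q') ≤ 𝓔(1_A Q)` into `𝓔(1_A 𝓔(Q'|ℱ t)) ≤ 𝓔(1_A 𝓔(Q|ℱ t))`,
while pointwise `1_A 𝓔(Q|ℱ t) ≤ 1_A 𝓔(Q'|ℱ t)`. Strict monotonicity then makes these two
indicators agree a.s., which is only possible if `A` is null. For the second claim take `A = Ω`:
`𝓔(Q) = 𝓔(𝓔(Q|ℱ t)) = 𝓔(𝓔(Q'|ℱ t)) = 𝓔(Q')`, and strict monotonicity gives `Q = Q'` a.s. -/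

section MonotoneFunctional

variable {Ω : Type*} {m0 : MeasurableSpace Ω} {ℙ : Measure Ω} {𝓔 : (Ω → ℝ) → ℝ} {f g : Ω → ℝ}

theorem expectation_congr_ae
    (hmono : ∀ Q Q' : Ω → ℝ, MemLp Q 2 ℙ → MemLp Q' 2 ℙ →
      (∀ᵐ ω ∂ℙ, Q' ω ≤ Q ω) → 𝓔 Q' ≤ 𝓔 Q)
    (hf : MemLp f 2 ℙ) (hg : MemLp g 2 ℙ) (hfg : f =ᵐ[ℙ] g) : 𝓔 f = 𝓔 g :=
  le_antisymm (hmono g f hg hf hfg.le) (hmono f g hf hg hfg.symm.le)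

theorem expectation_indicator_mono
    (hmono : ∀ Q Q' : Ω → ℝ, MemLp Q 2 ℙ → MemLp Q' 2 ℙ →
      (∀ᵐ ω ∂ℙ, Q' ω ≤ Q ω) → 𝓔 Q' ≤ 𝓔 Q)
    {A : Set Ω} (hA : MeasurableSet A) (hf : MemLp f 2 ℙ) (hg : MemLp g 2 ℙ)
    (hfg : ∀ᵐ ω ∂ℙ, f ω ≤ g ω) : 𝓔 (A.indicator f) ≤ 𝓔 (A.indicator g) :=
  hmono _ _ (hg.indicator hA) (hf.indicator hA) <| by
    filter_upwards [hfg] with ω hω using indicator_le_indicator hω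

theorem ae_le_of_expectation_indicator_le
    (hmono : ∀ Q Q' : Ω → ℝ, MemLp Q 2 ℙ → MemLp Q' 2 ℙ →
      (∀ᵐ ω ∂ℙ, Q' ω ≤ Q ω) → 𝓔 Q' ≤ 𝓔 Q)
    (hstrict : ∀ Q Q' : Ω → ℝ, MemLp Q 2 ℙ → MemLp Q' 2 ℙ →
      (∀ᵐ ω ∂ℙ, Q' ω ≤ Q ω) → 𝓔 Q = 𝓔 Q' → Q =ᵐ[ℙ] Q')
    (hf : MemLp f 2 ℙ) (hg : MemLp g 2 ℙ) (hA : MeasurableSet {ω | f ω < g ω})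
    (h : 𝓔 ({ω | f ω < g ω}.indicator g) ≤ 𝓔 ({ω | f ω < g ω}.indicator f)) :
    ∀ᵐ ω ∂ℙ, g ω ≤ f ω := by
  set A := {ω | f ω < g ω}
  have hfg : ∀ᵐ ω ∂ℙ, A.indicator f ω ≤ A.indicator g ω :=
    .of_forall fun ω => indicator_rel_indicator le_rfl fun (h : f ω < g ω) => h.le
  have heq : A.indicator g =ᵐ[ℙ] A.indicator f :=
    hstrict _ _ (hg.indicator hA) (hf.indicator hA) hfg
      (le_antisymm h (hmono _ _ (hg.indicator hA) (hf.indicator hA) hfg))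
  filter_upwards [heq] with ω hω
  by_contra hlt
  have hωA : ω ∈ A := lt_of_not_ge hlt
  rw [indicator_of_mem hωA, indicator_of_mem hωA] at hω
  exact hωA.ne' hω

end MonotoneFunctional

theorem stmt4_general
    {Ω : Type*} {m0 : MeasurableSpace Ω} (ℙ : Measure Ω)
    (T : ℝ)
    (ℱ : ℝ → MeasurableSpace Ω)
    (hℱle : ∀ t : ℝ, ℱ t ≤ m0)
    (𝓔 : (Ω → ℝ) → ℝ)
    -- strict monotonicity
    (hmono : ∀ Q Q' : Ω → ℝ, MemLp Q 2 ℙ → MemLp Q' 2 ℙ →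
      (∀ᵐ ω ∂ℙ, Q' ω ≤ Q ω) → 𝓔 Q' ≤ 𝓔 Q)
    (hstrict : ∀ Q Q' : Ω → ℝ, MemLp Q 2 ℙ → MemLp Q' 2 ℙ →
      (∀ᵐ ω ∂ℙ, Q' ω ≤ Q ω) → 𝓔 Q = 𝓔 Q' → Q =ᵐ[ℙ] Q')
    -- the conditional 𝓕-expectation `condE Q t = 𝓔(Q|𝓕_t)` and its defining properties
    (condE : (Ω → ℝ) → ℝ → Ω → ℝ)
    (hcondL2 : ∀ Q : Ω → ℝ, MemLp Q 2 ℙ → ∀ t ∈ Set.Icc (0:ℝ) T, MemLp (condE Q t) 2 ℙ)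
    (hcondMeas : ∀ Q : Ω → ℝ, MemLp Q 2 ℙ → ∀ t ∈ Set.Icc (0:ℝ) T,
      Measurable[ℱ t] (condE Q t))
    (hcondEq : ∀ Q : Ω → ℝ, MemLp Q 2 ℙ → ∀ t ∈ Set.Icc (0:ℝ) T,
      ∀ A : Set Ω, MeasurableSet[ℱ t] A → 𝓔 (A.indicator Q) = 𝓔 (A.indicator (condE Q t)))
    -- the statement
    (Q Q' : Ω → ℝ) (hQ : MemLp Q 2 ℙ)
    (hQ' : MemLp Q' 2 ℙ)
    (hQQ' : ∀ᵐ ω ∂ℙ, Q' ω ≤ Q ω) :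
    (∀ t ∈ Set.Icc (0:ℝ) T, ∀ᵐ ω ∂ℙ, condE Q' t ω ≤ condE Q t ω) ∧
    (∀ t ∈ Set.Icc (0:ℝ) T, condE Q t =ᵐ[ℙ] condE Q' t → Q =ᵐ[ℙ] Q') := by
  refine ⟨fun t ht => ?_, fun t ht hcond => ?_⟩
  · have hA : MeasurableSet[ℱ t] {ω | condE Q t ω < condE Q' t ω} :=
      measurableSet_lt (hcondMeas Q hQ t ht) (hcondMeas Q' hQ' t ht)
    refine ae_le_of_expectation_indicator_le hmono hstrict (hcondL2 Q hQ t ht)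
      (hcondL2 Q' hQ' t ht) (hℱle t _ hA) ?_
    rw [← hcondEq Q hQ t ht _ hA, ← hcondEq Q' hQ' t ht _ hA]
    exact expectation_indicator_mono hmono (hℱle t _ hA) hQ' hQ hQQ'
  · refine hstrict Q Q' hQ hQ' hQQ' ?_
    calc 𝓔 Q = 𝓔 (condE Q t) := by simpa using hcondEq Q hQ t ht univ .univ
      _ = 𝓔 (condE Q' t) :=
        expectation_congr_ae hmono (hcondL2 Q hQ t ht) (hcondL2 Q' hQ' t ht) hcond
      _ = 𝓔 Q' := by simpa using (hcondEq Q' hQ' t ht univ .univ).symm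

/-- Monotonicity and strict monotonicity of the conditional 𝓕-expectation. -/
theorem stmt4
    {Ω : Type*} {m0 : MeasurableSpace Ω} (ℙ : Measure Ω) [IsProbabilityMeasure ℙ]
    (T : ℝ) (hT : 0 < T)
    (ℱ : ℝ → MeasurableSpace Ω)
    (hℱmono : ∀ s t : ℝ, s ≤ t → ℱ s ≤ ℱ t)
    (hℱle : ∀ t : ℝ, ℱ t ≤ m0)
    (𝓔 : (Ω → ℝ) → ℝ)
    -- strict monotonicity
    (hmono : ∀ Q Q' : Ω → ℝ, MemLp Q 2 ℙ → MemLp Q' 2 ℙ →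
      (∀ᵐ ω ∂ℙ, Q' ω ≤ Q ω) → 𝓔 Q' ≤ 𝓔 Q)
    (hstrict : ∀ Q Q' : Ω → ℝ, MemLp Q 2 ℙ → MemLp Q' 2 ℙ →
      (∀ᵐ ω ∂ℙ, Q' ω ≤ Q ω) → 𝓔 Q = 𝓔 Q' → Q =ᵐ[ℙ] Q')
    -- preservation of constants
    (hconst : ∀ c : ℝ, 𝓔 (fun _ => c) = c)
    -- the conditional 𝓕-expectation `condE Q t = 𝓔(Q|𝓕_t)` and its defining properties
    (condE : (Ω → ℝ) → ℝ → Ω → ℝ)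
    (hcondL2 : ∀ Q : Ω → ℝ, MemLp Q 2 ℙ → ∀ t ∈ Set.Icc (0:ℝ) T, MemLp (condE Q t) 2 ℙ)
    (hcondMeas : ∀ Q : Ω → ℝ, MemLp Q 2 ℙ → ∀ t ∈ Set.Icc (0:ℝ) T,
      Measurable[ℱ t] (condE Q t))
    (hcondEq : ∀ Q : Ω → ℝ, MemLp Q 2 ℙ → ∀ t ∈ Set.Icc (0:ℝ) T,
      ∀ A : Set Ω, MeasurableSet[ℱ t] A → 𝓔 (A.indicator Q) = 𝓔 (A.indicator (condE Q t)))
    -- the statement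
    (Q Q' : Ω → ℝ) (hQ : MemLp Q 2 ℙ) (hQm : Measurable[ℱ T] Q)
    (hQ' : MemLp Q' 2 ℙ) (hQ'm : Measurable[ℱ T] Q')
    (hQQ' : ∀ᵐ ω ∂ℙ, Q' ω ≤ Q ω) :
    (∀ t ∈ Set.Icc (0:ℝ) T, ∀ᵐ ω ∂ℙ, condE Q' t ω ≤ condE Q t ω) ∧
    (∀ t ∈ Set.Icc (0:ℝ) T, condE Q t =ᵐ[ℙ] condE Q' t → Q =ᵐ[ℙ] Q') :=
  stmt4_general ℙ T ℱ hℱle 𝓔 hmono hstrict condE hcondL2 hcondMeas hcondEq Q Q' hQ hQ' hQQ'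
end

section
/- Let 𝓔 and 𝓔' be two translation invariant 𝓕-expectations. If 𝓔(X) ≤ 𝓔'(X) for all X ∈ L²(𝓕_T), then for every X ∈ L²(𝓕_T) and every t ∈ [0,T], 𝓔(X|𝓕_t) ≤ 𝓔'(X|𝓕_t) ℙ-almost surely. -/
/-!
Let `A = {𝓔'(X|𝓕_t) < 𝓔(X|𝓕_t)}`, an `𝓕_t`-measurable set, and shift `X` by the
`𝓕_t`-measurable variable `-1_A 𝓔(X|𝓕_t)`. By translation invariance the shifted variable `W`
has `𝓔(1_A W) = 𝓔(0) = 0` and `𝓔'(1_A W) = 𝓔'(1_A (𝓔'(X|𝓕_t) - 𝓔(X|𝓕_t)))`. The global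
comparison makes the latter nonnegative, while its argument is nonpositive, so strict
monotonicity of `𝓔'` forces `1_A (𝓔'(X|𝓕_t) - 𝓔(X|𝓕_t)) = 0` a.s., i.e. `A` is null.
-/

open MeasureTheory Filter Set

namespace NonlinearExpectation

variable {Ω : Type*} {m0 : MeasurableSpace Ω} {ℙ : Measure Ω}

/-- `cond Q` plays the role of the conditional expectation `𝓔(Q|m)`. -/
structure IsTransInvCondExpectation (ℙ : Measure Ω) (m : MeasurableSpace Ω)
    (𝓔 : (Ω → ℝ) → ℝ) (cond : (Ω → ℝ) → Ω → ℝ) : Prop where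
  mono : ∀ Q Q' : Ω → ℝ, MemLp Q 2 ℙ → MemLp Q' 2 ℙ → Q' ≤ᵐ[ℙ] Q → 𝓔 Q' ≤ 𝓔 Q
  map_const : ∀ c : ℝ, 𝓔 (fun _ => c) = c
  memLp_cond : ∀ Q : Ω → ℝ, MemLp Q 2 ℙ → MemLp (cond Q) 2 ℙ
  measurable_cond : ∀ Q : Ω → ℝ, MemLp Q 2 ℙ → Measurable[m] (cond Q)
  indicator_cond : ∀ Q : Ω → ℝ, MemLp Q 2 ℙ → ∀ A : Set Ω, MeasurableSet[m] A →
    𝓔 (A.indicator Q) = 𝓔 (A.indicator (cond Q))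
  cond_add : ∀ Q q : Ω → ℝ, MemLp Q 2 ℙ → MemLp q 2 ℙ → Measurable[m] q →
    cond (Q + q) =ᵐ[ℙ] cond Q + q

theorem map_congr_ae {𝓔 : (Ω → ℝ) → ℝ}
    (hmono : ∀ Q Q' : Ω → ℝ, MemLp Q 2 ℙ → MemLp Q' 2 ℙ → Q' ≤ᵐ[ℙ] Q → 𝓔 Q' ≤ 𝓔 Q)
    {f g : Ω → ℝ} (hf : MemLp f 2 ℙ) (hg : MemLp g 2 ℙ) (hfg : f =ᵐ[ℙ] g) : 𝓔 f = 𝓔 g :=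
  le_antisymm (hmono g f hg hf hfg.le) (hmono f g hf hg hfg.symm.le)

theorem ae_eq_zero_of_nonpos_of_nonneg {𝓔 : (Ω → ℝ) → ℝ}
    (hmono : ∀ Q Q' : Ω → ℝ, MemLp Q 2 ℙ → MemLp Q' 2 ℙ → Q' ≤ᵐ[ℙ] Q → 𝓔 Q' ≤ 𝓔 Q)
    (hstrict : ∀ Q Q' : Ω → ℝ, MemLp Q 2 ℙ → MemLp Q' 2 ℙ → Q' ≤ᵐ[ℙ] Q → 𝓔 Q = 𝓔 Q' →
      Q =ᵐ[ℙ] Q')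
    (hzero : 𝓔 0 = 0) {g : Ω → ℝ} (hg : MemLp g 2 ℙ) (hg_nonpos : g ≤ᵐ[ℙ] 0)
    (hg_nonneg : 0 ≤ 𝓔 g) : g =ᵐ[ℙ] 0 := by
  have h0 : MemLp (0 : Ω → ℝ) 2 ℙ := MemLp.zero
  have hle : 𝓔 g ≤ 0 := hzero ▸ hmono 0 g h0 hg hg_nonpos
  exact (hstrict 0 g h0 hg hg_nonpos (by linarith)).symm

namespace IsTransInvCondExpectation

variable {m : MeasurableSpace Ω} {𝓔 : (Ω → ℝ) → ℝ} {cond : (Ω → ℝ) → Ω → ℝ}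

theorem map_indicator_add (h : IsTransInvCondExpectation ℙ m 𝓔 cond) (hm : m ≤ m0)
    {X q : Ω → ℝ} (hX : MemLp X 2 ℙ) (hq : MemLp q 2 ℙ) (hqm : Measurable[m] q)
    {A : Set Ω} (hA : MeasurableSet[m] A) :
    𝓔 (A.indicator (X + q)) = 𝓔 (A.indicator (cond X + q)) := by
  have hXq : MemLp (X + q) 2 ℙ := hX.add hq
  rw [h.indicator_cond _ hXq A hA]
  refine map_congr_ae h.mono ((h.memLp_cond _ hXq).indicator (hm A hA))
    (((h.memLp_cond X hX).add hq).indicator (hm A hA)) ?_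
  filter_upwards [h.cond_add X q hX hq hqm] with ω hω
  simp only [indicator, hω]

theorem ae_cond_le_of_le {𝓔' : (Ω → ℝ) → ℝ} {cond' : (Ω → ℝ) → Ω → ℝ}
    (h : IsTransInvCondExpectation ℙ m 𝓔 cond) (h' : IsTransInvCondExpectation ℙ m 𝓔' cond')
    (hstrict' : ∀ Q Q' : Ω → ℝ, MemLp Q 2 ℙ → MemLp Q' 2 ℙ → Q' ≤ᵐ[ℙ] Q → 𝓔' Q = 𝓔' Q' →
      Q =ᵐ[ℙ] Q')
    (hm : m ≤ m0) (hle : ∀ X : Ω → ℝ, MemLp X 2 ℙ → 𝓔 X ≤ 𝓔' X)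
    {X : Ω → ℝ} (hX : MemLp X 2 ℙ) : cond X ≤ᵐ[ℙ] cond' X := by
  set Z := cond X
  set Z' := cond' X
  set A : Set Ω := {ω | Z' ω < Z ω}
  have hA : MeasurableSet[m] A :=
    measurableSet_lt (h'.measurable_cond X hX) (h.measurable_cond X hX)
  set q : Ω → ℝ := -A.indicator Z
  have hq : MemLp q 2 ℙ := ((h.memLp_cond X hX).indicator (hm A hA)).neg
  have hqm : Measurable[m] q := ((h.measurable_cond X hX).indicator hA).neg
  have hE : 𝓔 (A.indicator (X + q)) = 0 := by
    rw [h.map_indicator_add hm hX hq hqm hA, ← h.map_const 0]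
    congr 1
    ext ω
    by_cases hω : ω ∈ A <;> simp [q, Z, hω]
  have hE' : 𝓔' (A.indicator (X + q)) = 𝓔' (A.indicator (Z' - Z)) := by
    rw [h'.map_indicator_add hm hX hq hqm hA]
    congr 1
    ext ω
    by_cases hω : ω ∈ A <;> simp [q, Z, Z', hω, sub_eq_add_neg]
  have hgap : A.indicator (Z' - Z) =ᵐ[ℙ] 0 := by
    refine ae_eq_zero_of_nonpos_of_nonneg h'.mono hstrict' (h'.map_const 0)
      (((h'.memLp_cond X hX).sub (h.memLp_cond X hX)).indicator (hm A hA)) ?_ ?_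
    · exact Eventually.of_forall fun ω =>
        indicator_apply_le' (fun (hω : Z' ω < Z ω) => (sub_neg.2 hω).le) fun _ => le_rfl
    · rw [← hE, ← hE']
      exact hle _ ((hX.add hq).indicator (hm A hA))
  filter_upwards [hgap] with ω hω
  by_contra hlt
  have hωA : ω ∈ A := not_le.1 hlt
  have : Z' ω - Z ω = 0 := by simpa [hωA] using hω
  exact hlt (sub_eq_zero.1 this).ge

end IsTransInvCondExpectation

end NonlinearExpectation

theorem stmt10_general
    {Ω : Type*} {m0 : MeasurableSpace Ω} (ℙ : Measure Ω)
    (T : ℝ)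
    (ℱ : ℝ → MeasurableSpace Ω)
    (hℱle : ∀ t : ℝ, ℱ t ≤ m0)
    (𝓔 : (Ω → ℝ) → ℝ)
    -- strict monotonicity
    (hmono : ∀ Q Q' : Ω → ℝ, MemLp Q 2 ℙ → MemLp Q' 2 ℙ →
      (∀ᵐ ω ∂ℙ, Q' ω ≤ Q ω) → 𝓔 Q' ≤ 𝓔 Q)
    -- preservation of constants
    (hconst : ∀ c : ℝ, 𝓔 (fun _ => c) = c)
    -- the conditional 𝓕-expectation `condE Q t = 𝓔(Q|𝓕_t)` and its defining properties
    (condE : (Ω → ℝ) → ℝ → Ω → ℝ)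
    (hcondL2 : ∀ Q : Ω → ℝ, MemLp Q 2 ℙ → ∀ t ∈ Set.Icc (0:ℝ) T, MemLp (condE Q t) 2 ℙ)
    (hcondMeas : ∀ Q : Ω → ℝ, MemLp Q 2 ℙ → ∀ t ∈ Set.Icc (0:ℝ) T,
      Measurable[ℱ t] (condE Q t))
    (hcondEq : ∀ Q : Ω → ℝ, MemLp Q 2 ℙ → ∀ t ∈ Set.Icc (0:ℝ) T,
      ∀ A : Set Ω, MeasurableSet[ℱ t] A → 𝓔 (A.indicator Q) = 𝓔 (A.indicator (condE Q t)))
    -- 𝓔 is translation invariant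
    (htrans : ∀ Q q : Ω → ℝ, MemLp Q 2 ℙ → ∀ t ∈ Set.Icc (0:ℝ) T,
      MemLp q 2 ℙ → Measurable[ℱ t] q →
      condE (fun ω => Q ω + q ω) t =ᵐ[ℙ] fun ω => condE Q t ω + q ω)
    -- a second 𝓕-expectation 𝓔' with conditional expectation condE'
    (𝓔' : (Ω → ℝ) → ℝ)
    (hmono' : ∀ Q Q' : Ω → ℝ, MemLp Q 2 ℙ → MemLp Q' 2 ℙ →
      (∀ᵐ ω ∂ℙ, Q' ω ≤ Q ω) → 𝓔' Q' ≤ 𝓔' Q)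
    (hstrict' : ∀ Q Q' : Ω → ℝ, MemLp Q 2 ℙ → MemLp Q' 2 ℙ →
      (∀ᵐ ω ∂ℙ, Q' ω ≤ Q ω) → 𝓔' Q = 𝓔' Q' → Q =ᵐ[ℙ] Q')
    (hconst' : ∀ c : ℝ, 𝓔' (fun _ => c) = c)
    (condE' : (Ω → ℝ) → ℝ → Ω → ℝ)
    (hcondL2' : ∀ Q : Ω → ℝ, MemLp Q 2 ℙ → ∀ t ∈ Set.Icc (0:ℝ) T, MemLp (condE' Q t) 2 ℙ)
    (hcondMeas' : ∀ Q : Ω → ℝ, MemLp Q 2 ℙ → ∀ t ∈ Set.Icc (0:ℝ) T,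
      Measurable[ℱ t] (condE' Q t))
    (hcondEq' : ∀ Q : Ω → ℝ, MemLp Q 2 ℙ → ∀ t ∈ Set.Icc (0:ℝ) T,
      ∀ A : Set Ω, MeasurableSet[ℱ t] A → 𝓔' (A.indicator Q) = 𝓔' (A.indicator (condE' Q t)))
    -- 𝓔' is translation invariant
    (htrans' : ∀ Q q : Ω → ℝ, MemLp Q 2 ℙ → ∀ t ∈ Set.Icc (0:ℝ) T,
      MemLp q 2 ℙ → Measurable[ℱ t] q →
      condE' (fun ω => Q ω + q ω) t =ᵐ[ℙ] fun ω => condE' Q t ω + q ω)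
    -- global comparison
    (hle : ∀ X : Ω → ℝ, MemLp X 2 ℙ → 𝓔 X ≤ 𝓔' X)
    -- the statement
    (X : Ω → ℝ) (hX : MemLp X 2 ℙ)
    (t : ℝ) (ht : t ∈ Set.Icc (0:ℝ) T) :
    ∀ᵐ ω ∂ℙ, condE X t ω ≤ condE' X t ω := by
  have hE : NonlinearExpectation.IsTransInvCondExpectation ℙ (ℱ t) 𝓔 (condE · t) :=
    ⟨hmono, hconst, (hcondL2 · · t ht), (hcondMeas · · t ht), (hcondEq · · t ht),
      fun Q q hQ hq hqm => htrans Q q hQ t ht hq hqm⟩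
  have hE' : NonlinearExpectation.IsTransInvCondExpectation ℙ (ℱ t) 𝓔' (condE' · t) :=
    ⟨hmono', hconst', (hcondL2' · · t ht), (hcondMeas' · · t ht), (hcondEq' · · t ht),
      fun Q q hQ hq hqm => htrans' Q q hQ t ht hq hqm⟩
  exact hE.ae_cond_le_of_le hE' hstrict' (hℱle t) hle hX

/-- If two translation invariant 𝓕-expectations satisfy `𝓔(X) ≤ 𝓔'(X)` for all X,
then their conditional expectations satisfy the same inequality a.s. -/
theorem stmt10
    {Ω : Type*} {m0 : MeasurableSpace Ω} (ℙ : Measure Ω) [IsProbabilityMeasure ℙ]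
    (T : ℝ) (hT : 0 < T)
    (ℱ : ℝ → MeasurableSpace Ω)
    (hℱmono : ∀ s t : ℝ, s ≤ t → ℱ s ≤ ℱ t)
    (hℱle : ∀ t : ℝ, ℱ t ≤ m0)
    (𝓔 : (Ω → ℝ) → ℝ)
    -- strict monotonicity
    (hmono : ∀ Q Q' : Ω → ℝ, MemLp Q 2 ℙ → MemLp Q' 2 ℙ →
      (∀ᵐ ω ∂ℙ, Q' ω ≤ Q ω) → 𝓔 Q' ≤ 𝓔 Q)
    (hstrict : ∀ Q Q' : Ω → ℝ, MemLp Q 2 ℙ → MemLp Q' 2 ℙ →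
      (∀ᵐ ω ∂ℙ, Q' ω ≤ Q ω) → 𝓔 Q = 𝓔 Q' → Q =ᵐ[ℙ] Q')
    -- preservation of constants
    (hconst : ∀ c : ℝ, 𝓔 (fun _ => c) = c)
    -- the conditional 𝓕-expectation `condE Q t = 𝓔(Q|𝓕_t)` and its defining properties
    (condE : (Ω → ℝ) → ℝ → Ω → ℝ)
    (hcondL2 : ∀ Q : Ω → ℝ, MemLp Q 2 ℙ → ∀ t ∈ Set.Icc (0:ℝ) T, MemLp (condE Q t) 2 ℙ)
    (hcondMeas : ∀ Q : Ω → ℝ, MemLp Q 2 ℙ → ∀ t ∈ Set.Icc (0:ℝ) T,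
      Measurable[ℱ t] (condE Q t))
    (hcondEq : ∀ Q : Ω → ℝ, MemLp Q 2 ℙ → ∀ t ∈ Set.Icc (0:ℝ) T,
      ∀ A : Set Ω, MeasurableSet[ℱ t] A → 𝓔 (A.indicator Q) = 𝓔 (A.indicator (condE Q t)))
    -- 𝓔 is translation invariant
    (htrans : ∀ Q q : Ω → ℝ, MemLp Q 2 ℙ → ∀ t ∈ Set.Icc (0:ℝ) T,
      MemLp q 2 ℙ → Measurable[ℱ t] q →
      condE (fun ω => Q ω + q ω) t =ᵐ[ℙ] fun ω => condE Q t ω + q ω)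
    -- a second 𝓕-expectation 𝓔' with conditional expectation condE'
    (𝓔' : (Ω → ℝ) → ℝ)
    (hmono' : ∀ Q Q' : Ω → ℝ, MemLp Q 2 ℙ → MemLp Q' 2 ℙ →
      (∀ᵐ ω ∂ℙ, Q' ω ≤ Q ω) → 𝓔' Q' ≤ 𝓔' Q)
    (hstrict' : ∀ Q Q' : Ω → ℝ, MemLp Q 2 ℙ → MemLp Q' 2 ℙ →
      (∀ᵐ ω ∂ℙ, Q' ω ≤ Q ω) → 𝓔' Q = 𝓔' Q' → Q =ᵐ[ℙ] Q')
    (hconst' : ∀ c : ℝ, 𝓔' (fun _ => c) = c)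
    (condE' : (Ω → ℝ) → ℝ → Ω → ℝ)
    (hcondL2' : ∀ Q : Ω → ℝ, MemLp Q 2 ℙ → ∀ t ∈ Set.Icc (0:ℝ) T, MemLp (condE' Q t) 2 ℙ)
    (hcondMeas' : ∀ Q : Ω → ℝ, MemLp Q 2 ℙ → ∀ t ∈ Set.Icc (0:ℝ) T,
      Measurable[ℱ t] (condE' Q t))
    (hcondEq' : ∀ Q : Ω → ℝ, MemLp Q 2 ℙ → ∀ t ∈ Set.Icc (0:ℝ) T,
      ∀ A : Set Ω, MeasurableSet[ℱ t] A → 𝓔' (A.indicator Q) = 𝓔' (A.indicator (condE' Q t)))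
    -- 𝓔' is translation invariant
    (htrans' : ∀ Q q : Ω → ℝ, MemLp Q 2 ℙ → ∀ t ∈ Set.Icc (0:ℝ) T,
      MemLp q 2 ℙ → Measurable[ℱ t] q →
      condE' (fun ω => Q ω + q ω) t =ᵐ[ℙ] fun ω => condE' Q t ω + q ω)
    -- global comparison
    (hle : ∀ X : Ω → ℝ, MemLp X 2 ℙ → 𝓔 X ≤ 𝓔' X)
    -- the statement
    (X : Ω → ℝ) (hX : MemLp X 2 ℙ) (hXm : Measurable[ℱ T] X)
    (t : ℝ) (ht : t ∈ Set.Icc (0:ℝ) T) :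
    ∀ᵐ ω ∂ℙ, condE X t ω ≤ condE' X t ω :=
  stmt10_general ℙ T ℱ hℱle 𝓔 hmono hconst condE hcondL2 hcondMeas hcondEq htrans 𝓔' hmono' hstrict'
    hconst' condE' hcondL2' hcondMeas' hcondEq' htrans' hle X hX t ht
end

section
/- Let 𝓔 and 𝓔' be translation invariant 𝓕-expectations, and suppose 𝓔 is dominated by 𝓔'. Then for every X ∈ L²(𝓕_T) and every t ∈ [0,T], −𝓔'(−X|𝓕_t) ≤ 𝓔(X|𝓕_t) ≤ 𝓔'(X|𝓕_t) ℙ-almost surely. (In the paper 𝓔' = 𝓔^r, the g-expectation with driver g(t,z) = ‖r_t z‖_{M_t}, and −𝓔'(−X|𝓕_t) = 𝓔^{−r}(X|𝓕_t).) -/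
/-!
Fix `t` and write `C`, `C'` for the two conditional expectations at `𝓕_t`. Translation invariance
of `𝓔'` gives `C'(W - C' W) = 0`, hence `𝓔'(1_B (W - C' W)) = 0` for every `B ∈ 𝓕_t`, and
domination turns this into `𝓔(1_B V + 1_B (W - C' W)) ≤ 𝓔(1_B V)`. With `(W, V) = (X, C' X)`
this reads `𝓔(1_B C X) = 𝓔(1_B X) ≤ 𝓔(1_B C' X)`, and with `(W, V) = (-X, X)` it reads
`𝓔(1_B (-C'(-X))) ≤ 𝓔(1_B X) = 𝓔(1_B C X)`. Testing such an inequality on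
`B = {g < f}` and using strict monotonicity shows `f ≤ g` a.s.
-/

open MeasureTheory Filter Set

section

variable {Ω : Type*} {m m0 : MeasurableSpace Ω} {ℙ : Measure Ω} {E : (Ω → ℝ) → ℝ}

lemma apply_congr_ae
    (hmono : ∀ Q Q' : Ω → ℝ, MemLp Q 2 ℙ → MemLp Q' 2 ℙ →
      (∀ᵐ ω ∂ℙ, Q' ω ≤ Q ω) → E Q' ≤ E Q)
    {f g : Ω → ℝ} (hf : MemLp f 2 ℙ) (hg : MemLp g 2 ℙ) (hfg : f =ᵐ[ℙ] g) :
    E f = E g :=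
  le_antisymm (hmono g f hg hf hfg.le) (hmono f g hf hg hfg.symm.le)

lemma ae_le_of_forall_apply_indicator_le (hm : m ≤ m0)
    (hmono : ∀ Q Q' : Ω → ℝ, MemLp Q 2 ℙ → MemLp Q' 2 ℙ →
      (∀ᵐ ω ∂ℙ, Q' ω ≤ Q ω) → E Q' ≤ E Q)
    (hstrict : ∀ Q Q' : Ω → ℝ, MemLp Q 2 ℙ → MemLp Q' 2 ℙ →
      (∀ᵐ ω ∂ℙ, Q' ω ≤ Q ω) → E Q = E Q' → Q =ᵐ[ℙ] Q')
    {f g : Ω → ℝ} (hf : MemLp f 2 ℙ) (hg : MemLp g 2 ℙ)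
    (hfm : Measurable[m] f) (hgm : Measurable[m] g)
    (h : ∀ B : Set Ω, MeasurableSet[m] B → E (B.indicator f) ≤ E (B.indicator g)) :
    ∀ᵐ ω ∂ℙ, f ω ≤ g ω := by
  set B : Set Ω := {ω | g ω < f ω}
  have hB : MeasurableSet[m] B := measurableSet_lt hgm hfm
  have hfB := hf.indicator (hm B hB)
  have hgB := hg.indicator (hm B hB)
  have hgf : ∀ ω, B.indicator g ω ≤ B.indicator f ω := fun ω => by
    by_cases hω : ω ∈ B
    · simpa [indicator_of_mem hω] using le_of_lt hω
    · simp [indicator_of_notMem hω]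
  have heq : B.indicator f =ᵐ[ℙ] B.indicator g :=
    hstrict _ _ hfB hgB (.of_forall hgf)
      (le_antisymm (h B hB) (hmono _ _ hfB hgB (.of_forall hgf)))
  filter_upwards [heq] with ω hω
  by_contra hlt
  have hω' : ω ∈ B := lt_of_not_ge hlt
  simp only [indicator_of_mem hω'] at hω
  exact hω'.ne hω.symm

lemma apply_indicator_sub_cond_eq_zero (hm : m ≤ m0)
    (hmono : ∀ Q Q' : Ω → ℝ, MemLp Q 2 ℙ → MemLp Q' 2 ℙ →
      (∀ᵐ ω ∂ℙ, Q' ω ≤ Q ω) → E Q' ≤ E Q)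
    (hzero : E 0 = 0) {C : (Ω → ℝ) → Ω → ℝ}
    (hCL2 : ∀ Q : Ω → ℝ, MemLp Q 2 ℙ → MemLp (C Q) 2 ℙ)
    (hCm : ∀ Q : Ω → ℝ, MemLp Q 2 ℙ → Measurable[m] (C Q))
    (hCeq : ∀ Q : Ω → ℝ, MemLp Q 2 ℙ →
      ∀ A : Set Ω, MeasurableSet[m] A → E (A.indicator Q) = E (A.indicator (C Q)))
    (htrans : ∀ Q q : Ω → ℝ, MemLp Q 2 ℙ → MemLp q 2 ℙ → Measurable[m] q →
      C (fun ω => Q ω + q ω) =ᵐ[ℙ] fun ω => C Q ω + q ω)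
    {W : Ω → ℝ} (hW : MemLp W 2 ℙ) {B : Set Ω} (hB : MeasurableSet[m] B) :
    E (B.indicator (W - C W)) = 0 := by
  have hV : MemLp (W - C W) 2 ℙ := hW.sub (hCL2 W hW)
  have hCV : C (W - C W) =ᵐ[ℙ] 0 := by
    have h := htrans W (-C W) hW (hCL2 W hW).neg (hCm W hW).neg
    rw [show (fun ω => W ω + (-C W) ω) = W - C W from (sub_eq_add_neg W (C W)).symm] at h
    filter_upwards [h] with ω hω
    simpa using hω
  calc E (B.indicator (W - C W))
      = E (B.indicator (C (W - C W))) := hCeq _ hV B hB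
    _ = E 0 := apply_congr_ae hmono ((hCL2 _ hV).indicator (hm B hB)) .zero
          (by filter_upwards [hCV] with ω hω; simp [hω])
    _ = 0 := hzero

lemma ae_neg_cond_neg_le_cond_and_cond_le_cond_of_dominated (hm : m ≤ m0)
    (hmono : ∀ Q Q' : Ω → ℝ, MemLp Q 2 ℙ → MemLp Q' 2 ℙ →
      (∀ᵐ ω ∂ℙ, Q' ω ≤ Q ω) → E Q' ≤ E Q)
    (hstrict : ∀ Q Q' : Ω → ℝ, MemLp Q 2 ℙ → MemLp Q' 2 ℙ →
      (∀ᵐ ω ∂ℙ, Q' ω ≤ Q ω) → E Q = E Q' → Q =ᵐ[ℙ] Q')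
    {C : (Ω → ℝ) → Ω → ℝ}
    (hCL2 : ∀ Q : Ω → ℝ, MemLp Q 2 ℙ → MemLp (C Q) 2 ℙ)
    (hCm : ∀ Q : Ω → ℝ, MemLp Q 2 ℙ → Measurable[m] (C Q))
    (hCeq : ∀ Q : Ω → ℝ, MemLp Q 2 ℙ →
      ∀ A : Set Ω, MeasurableSet[m] A → E (A.indicator Q) = E (A.indicator (C Q)))
    {E' : (Ω → ℝ) → ℝ}
    (hmono' : ∀ Q Q' : Ω → ℝ, MemLp Q 2 ℙ → MemLp Q' 2 ℙ →
      (∀ᵐ ω ∂ℙ, Q' ω ≤ Q ω) → E' Q' ≤ E' Q)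
    (hzero' : E' 0 = 0) {C' : (Ω → ℝ) → Ω → ℝ}
    (hC'L2 : ∀ Q : Ω → ℝ, MemLp Q 2 ℙ → MemLp (C' Q) 2 ℙ)
    (hC'm : ∀ Q : Ω → ℝ, MemLp Q 2 ℙ → Measurable[m] (C' Q))
    (hC'eq : ∀ Q : Ω → ℝ, MemLp Q 2 ℙ →
      ∀ A : Set Ω, MeasurableSet[m] A → E' (A.indicator Q) = E' (A.indicator (C' Q)))
    (htrans' : ∀ Q q : Ω → ℝ, MemLp Q 2 ℙ → MemLp q 2 ℙ → Measurable[m] q →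
      C' (fun ω => Q ω + q ω) =ᵐ[ℙ] fun ω => C' Q ω + q ω)
    (hdom : ∀ X η : Ω → ℝ, MemLp X 2 ℙ → MemLp η 2 ℙ →
      E (fun ω => X ω + η ω) - E η ≤ E' X)
    {X : Ω → ℝ} (hX : MemLp X 2 ℙ) :
    ∀ᵐ ω ∂ℙ, -C' (-X) ω ≤ C X ω ∧ C X ω ≤ C' X ω := by
  have key : ∀ {W V : Ω → ℝ}, MemLp W 2 ℙ → MemLp V 2 ℙ → ∀ {B : Set Ω}, MeasurableSet[m] B →
      E (B.indicator (W - C' W) + B.indicator V) ≤ E (B.indicator V) := by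
    intro W V hW hV B hB
    have h := hdom _ _ ((hW.sub (hC'L2 W hW)).indicator (hm B hB)) (hV.indicator (hm B hB))
    rw [apply_indicator_sub_cond_eq_zero hm hmono' hzero' hC'L2 hC'm hC'eq htrans' hW hB] at h
    exact sub_nonpos.mp h
  have hCX := hCL2 X hX
  have hC'X := hC'L2 X hX
  have hC'nX := hC'L2 (-X) hX.neg
  refine (ae_le_of_forall_apply_indicator_le hm hmono hstrict hC'nX.neg hCX
    (hC'm _ hX.neg).neg (hCm X hX) fun B hB => ?_).and
    (ae_le_of_forall_apply_indicator_le hm hmono hstrict hCX hC'X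
    (hCm X hX) (hC'm X hX) fun B hB => ?_)
  · calc E (B.indicator (-C' (-X)))
        = E (B.indicator (-X - C' (-X)) + B.indicator X) := by
          rw [← indicator_add']
          congr 2
          abel
      _ ≤ E (B.indicator X) := key hX.neg hX hB
      _ = E (B.indicator (C X)) := hCeq X hX B hB
  · calc E (B.indicator (C X))
        = E (B.indicator (X - C' X) + B.indicator (C' X)) := by
          rw [← hCeq X hX B hB, ← indicator_add', sub_add_cancel]
      _ ≤ E (B.indicator (C' X)) := key hX hC'X hB

end

theorem stmt11_general
    {Ω : Type*} {m0 : MeasurableSpace Ω} (ℙ : Measure Ω)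
    (T : ℝ)
    (ℱ : ℝ → MeasurableSpace Ω)
    (hℱle : ∀ t : ℝ, ℱ t ≤ m0)
    (𝓔 : (Ω → ℝ) → ℝ)
    -- strict monotonicity
    (hmono : ∀ Q Q' : Ω → ℝ, MemLp Q 2 ℙ → MemLp Q' 2 ℙ →
      (∀ᵐ ω ∂ℙ, Q' ω ≤ Q ω) → 𝓔 Q' ≤ 𝓔 Q)
    (hstrict : ∀ Q Q' : Ω → ℝ, MemLp Q 2 ℙ → MemLp Q' 2 ℙ →
      (∀ᵐ ω ∂ℙ, Q' ω ≤ Q ω) → 𝓔 Q = 𝓔 Q' → Q =ᵐ[ℙ] Q')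
    -- the conditional 𝓕-expectation `condE Q t = 𝓔(Q|𝓕_t)` and its defining properties
    (condE : (Ω → ℝ) → ℝ → Ω → ℝ)
    (hcondL2 : ∀ Q : Ω → ℝ, MemLp Q 2 ℙ → ∀ t ∈ Set.Icc (0:ℝ) T, MemLp (condE Q t) 2 ℙ)
    (hcondMeas : ∀ Q : Ω → ℝ, MemLp Q 2 ℙ → ∀ t ∈ Set.Icc (0:ℝ) T,
      Measurable[ℱ t] (condE Q t))
    (hcondEq : ∀ Q : Ω → ℝ, MemLp Q 2 ℙ → ∀ t ∈ Set.Icc (0:ℝ) T,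
      ∀ A : Set Ω, MeasurableSet[ℱ t] A → 𝓔 (A.indicator Q) = 𝓔 (A.indicator (condE Q t)))
    -- a second 𝓕-expectation 𝓔' with conditional expectation condE'
    (𝓔' : (Ω → ℝ) → ℝ)
    (hmono' : ∀ Q Q' : Ω → ℝ, MemLp Q 2 ℙ → MemLp Q' 2 ℙ →
      (∀ᵐ ω ∂ℙ, Q' ω ≤ Q ω) → 𝓔' Q' ≤ 𝓔' Q)
    (hconst' : ∀ c : ℝ, 𝓔' (fun _ => c) = c)
    (condE' : (Ω → ℝ) → ℝ → Ω → ℝ)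
    (hcondL2' : ∀ Q : Ω → ℝ, MemLp Q 2 ℙ → ∀ t ∈ Set.Icc (0:ℝ) T, MemLp (condE' Q t) 2 ℙ)
    (hcondMeas' : ∀ Q : Ω → ℝ, MemLp Q 2 ℙ → ∀ t ∈ Set.Icc (0:ℝ) T,
      Measurable[ℱ t] (condE' Q t))
    (hcondEq' : ∀ Q : Ω → ℝ, MemLp Q 2 ℙ → ∀ t ∈ Set.Icc (0:ℝ) T,
      ∀ A : Set Ω, MeasurableSet[ℱ t] A → 𝓔' (A.indicator Q) = 𝓔' (A.indicator (condE' Q t)))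
    -- 𝓔' is translation invariant
    (htrans' : ∀ Q q : Ω → ℝ, MemLp Q 2 ℙ → ∀ t ∈ Set.Icc (0:ℝ) T,
      MemLp q 2 ℙ → Measurable[ℱ t] q →
      condE' (fun ω => Q ω + q ω) t =ᵐ[ℙ] fun ω => condE' Q t ω + q ω)
    -- 𝓔 is dominated by 𝓔'
    (hdom : ∀ X η : Ω → ℝ, MemLp X 2 ℙ → MemLp η 2 ℙ →
      𝓔 (fun ω => X ω + η ω) - 𝓔 η ≤ 𝓔' X)
    -- the statement
    (X : Ω → ℝ) (hX : MemLp X 2 ℙ)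
    (t : ℝ) (ht : t ∈ Set.Icc (0:ℝ) T) :
    ∀ᵐ ω ∂ℙ, -condE' (fun ω' => -X ω') t ω ≤ condE X t ω ∧ condE X t ω ≤ condE' X t ω :=
  ae_neg_cond_neg_le_cond_and_cond_le_cond_of_dominated (hℱle t) hmono hstrict
    (C := fun Q => condE Q t) (fun Q hQ => hcondL2 Q hQ t ht) (fun Q hQ => hcondMeas Q hQ t ht)
    (fun Q hQ => hcondEq Q hQ t ht) hmono' (hconst' 0) (C' := fun Q => condE' Q t)
    (fun Q hQ => hcondL2' Q hQ t ht) (fun Q hQ => hcondMeas' Q hQ t ht)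
    (fun Q hQ => hcondEq' Q hQ t ht) (fun Q q hQ hq hqm => htrans' Q q hQ t ht hq hqm) hdom hX

/-- If 𝓔 and 𝓔' are translation invariant 𝓕-expectations and 𝓔 is dominated by 𝓔',
then `-𝓔'(-X|𝓕_t) ≤ 𝓔(X|𝓕_t) ≤ 𝓔'(X|𝓕_t)` ℙ-a.s. -/
theorem stmt11
    {Ω : Type*} {m0 : MeasurableSpace Ω} (ℙ : Measure Ω) [IsProbabilityMeasure ℙ]
    (T : ℝ) (hT : 0 < T)
    (ℱ : ℝ → MeasurableSpace Ω)
    (hℱmono : ∀ s t : ℝ, s ≤ t → ℱ s ≤ ℱ t)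
    (hℱle : ∀ t : ℝ, ℱ t ≤ m0)
    (𝓔 : (Ω → ℝ) → ℝ)
    -- strict monotonicity
    (hmono : ∀ Q Q' : Ω → ℝ, MemLp Q 2 ℙ → MemLp Q' 2 ℙ →
      (∀ᵐ ω ∂ℙ, Q' ω ≤ Q ω) → 𝓔 Q' ≤ 𝓔 Q)
    (hstrict : ∀ Q Q' : Ω → ℝ, MemLp Q 2 ℙ → MemLp Q' 2 ℙ →
      (∀ᵐ ω ∂ℙ, Q' ω ≤ Q ω) → 𝓔 Q = 𝓔 Q' → Q =ᵐ[ℙ] Q')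
    -- preservation of constants
    (hconst : ∀ c : ℝ, 𝓔 (fun _ => c) = c)
    -- the conditional 𝓕-expectation `condE Q t = 𝓔(Q|𝓕_t)` and its defining properties
    (condE : (Ω → ℝ) → ℝ → Ω → ℝ)
    (hcondL2 : ∀ Q : Ω → ℝ, MemLp Q 2 ℙ → ∀ t ∈ Set.Icc (0:ℝ) T, MemLp (condE Q t) 2 ℙ)
    (hcondMeas : ∀ Q : Ω → ℝ, MemLp Q 2 ℙ → ∀ t ∈ Set.Icc (0:ℝ) T,
      Measurable[ℱ t] (condE Q t))
    (hcondEq : ∀ Q : Ω → ℝ, MemLp Q 2 ℙ → ∀ t ∈ Set.Icc (0:ℝ) T,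
      ∀ A : Set Ω, MeasurableSet[ℱ t] A → 𝓔 (A.indicator Q) = 𝓔 (A.indicator (condE Q t)))
    -- 𝓔 is translation invariant
    (htrans : ∀ Q q : Ω → ℝ, MemLp Q 2 ℙ → ∀ t ∈ Set.Icc (0:ℝ) T,
      MemLp q 2 ℙ → Measurable[ℱ t] q →
      condE (fun ω => Q ω + q ω) t =ᵐ[ℙ] fun ω => condE Q t ω + q ω)
    -- a second 𝓕-expectation 𝓔' with conditional expectation condE'
    (𝓔' : (Ω → ℝ) → ℝ)
    (hmono' : ∀ Q Q' : Ω → ℝ, MemLp Q 2 ℙ → MemLp Q' 2 ℙ →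
      (∀ᵐ ω ∂ℙ, Q' ω ≤ Q ω) → 𝓔' Q' ≤ 𝓔' Q)
    (hstrict' : ∀ Q Q' : Ω → ℝ, MemLp Q 2 ℙ → MemLp Q' 2 ℙ →
      (∀ᵐ ω ∂ℙ, Q' ω ≤ Q ω) → 𝓔' Q = 𝓔' Q' → Q =ᵐ[ℙ] Q')
    (hconst' : ∀ c : ℝ, 𝓔' (fun _ => c) = c)
    (condE' : (Ω → ℝ) → ℝ → Ω → ℝ)
    (hcondL2' : ∀ Q : Ω → ℝ, MemLp Q 2 ℙ → ∀ t ∈ Set.Icc (0:ℝ) T, MemLp (condE' Q t) 2 ℙ)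
    (hcondMeas' : ∀ Q : Ω → ℝ, MemLp Q 2 ℙ → ∀ t ∈ Set.Icc (0:ℝ) T,
      Measurable[ℱ t] (condE' Q t))
    (hcondEq' : ∀ Q : Ω → ℝ, MemLp Q 2 ℙ → ∀ t ∈ Set.Icc (0:ℝ) T,
      ∀ A : Set Ω, MeasurableSet[ℱ t] A → 𝓔' (A.indicator Q) = 𝓔' (A.indicator (condE' Q t)))
    -- 𝓔' is translation invariant
    (htrans' : ∀ Q q : Ω → ℝ, MemLp Q 2 ℙ → ∀ t ∈ Set.Icc (0:ℝ) T,
      MemLp q 2 ℙ → Measurable[ℱ t] q →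
      condE' (fun ω => Q ω + q ω) t =ᵐ[ℙ] fun ω => condE' Q t ω + q ω)
    -- 𝓔 is dominated by 𝓔'
    (hdom : ∀ X η : Ω → ℝ, MemLp X 2 ℙ → MemLp η 2 ℙ →
      𝓔 (fun ω => X ω + η ω) - 𝓔 η ≤ 𝓔' X)
    -- the statement
    (X : Ω → ℝ) (hX : MemLp X 2 ℙ) (hXm : Measurable[ℱ T] X)
    (t : ℝ) (ht : t ∈ Set.Icc (0:ℝ) T) :
    ∀ᵐ ω ∂ℙ, -condE' (fun ω' => -X ω') t ω ≤ condE X t ω ∧ condE X t ω ≤ condE' X t ω :=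
  stmt11_general ℙ T ℱ hℱle 𝓔 hmono hstrict condE hcondL2 hcondMeas hcondEq 𝓔' hmono' hconst' condE'
    hcondL2' hcondMeas' hcondEq' htrans' hdom X hX t ht
end

section
/- Let 𝓔 be an 𝓕-expectation that is L²-Lipschitz, i.e., there exists C ≥ 0 with |𝓔(X) − 𝓔(X')| ≤ C‖X − X'‖_{L²(ℙ)} for all X, X' ∈ L²(𝓕_T). Let Y be an 𝓔-martingale, let t ∈ [0,T), let (s_n) be a sequence in (t,T] with s_n → t, and suppose Y_{s_n} → W in L²(ℙ) for some 𝓕_t-measurable W ∈ L²(𝓕_T). Then W = Y_t ℙ-almost surely. -/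
open MeasureTheory Filter Set

/-!
Fix `A ∈ 𝓕_t`. The martingale property and the defining property of `𝓔(·|𝓕_t)` give
`𝓔(1_A Y_{sₙ}) = 𝓔(1_A Y_t)` for every `n`, while `1_A Y_{sₙ} → 1_A W` in L², so the Lipschitz
bound yields `𝓔(1_A W) = 𝓔(1_A Y_t)`. Testing this on `A = {Y_t < W}` and `A = {W < Y_t}`,
strict monotonicity forces both sets to be null.
-/

section NonlinearExpectation

variable {Ω : Type*} {m0 : MeasurableSpace Ω} {μ : Measure Ω} {𝓔 : (Ω → ℝ) → ℝ}

theorem eq_of_ae_eq_of_monotone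
    (hmono : ∀ Q Q' : Ω → ℝ, MemLp Q 2 μ → MemLp Q' 2 μ →
      (∀ᵐ ω ∂μ, Q' ω ≤ Q ω) → 𝓔 Q' ≤ 𝓔 Q)
    {Q Q' : Ω → ℝ} (hQ : MemLp Q 2 μ) (hQ' : MemLp Q' 2 μ) (h : Q =ᵐ[μ] Q') :
    𝓔 Q = 𝓔 Q' :=
  le_antisymm (hmono Q' Q hQ' hQ h.le) (hmono Q Q' hQ hQ' h.symm.le)

theorem ae_le_of_forall_eval_indicator_eq
    (hstrict : ∀ Q Q' : Ω → ℝ, MemLp Q 2 μ → MemLp Q' 2 μ →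
      (∀ᵐ ω ∂μ, Q' ω ≤ Q ω) → 𝓔 Q = 𝓔 Q' → Q =ᵐ[μ] Q')
    {m : MeasurableSpace Ω} (hm : m ≤ m0) {X Z : Ω → ℝ}
    (hX : MemLp X 2 μ) (hZ : MemLp Z 2 μ) (hXm : Measurable[m] X) (hZm : Measurable[m] Z)
    (h : ∀ A, MeasurableSet[m] A → 𝓔 (A.indicator X) = 𝓔 (A.indicator Z)) :
    X ≤ᵐ[μ] Z := by
  set A : Set Ω := {ω | Z ω < X ω}
  have hA : MeasurableSet[m] A := measurableSet_lt hZm hXm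
  have hle : ∀ᵐ ω ∂μ, A.indicator Z ω ≤ A.indicator X ω :=
    .of_forall fun ω => indicator_le_indicator' fun hω => hω.le
  have heq : A.indicator X =ᵐ[μ] A.indicator Z :=
    hstrict _ _ (hX.indicator (hm A hA)) (hZ.indicator (hm A hA)) hle (h A hA)
  filter_upwards [heq] with ω hω
  by_cases hωA : ω ∈ A
  · simp only [indicator_of_mem hωA] at hω
    exact hω.le
  · exact not_lt.mp hωA

theorem ae_eq_of_forall_eval_indicator_eq
    (hstrict : ∀ Q Q' : Ω → ℝ, MemLp Q 2 μ → MemLp Q' 2 μ →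
      (∀ᵐ ω ∂μ, Q' ω ≤ Q ω) → 𝓔 Q = 𝓔 Q' → Q =ᵐ[μ] Q')
    {m : MeasurableSpace Ω} (hm : m ≤ m0) {X Z : Ω → ℝ}
    (hX : MemLp X 2 μ) (hZ : MemLp Z 2 μ) (hXm : Measurable[m] X) (hZm : Measurable[m] Z)
    (h : ∀ A, MeasurableSet[m] A → 𝓔 (A.indicator X) = 𝓔 (A.indicator Z)) :
    X =ᵐ[μ] Z :=
  (ae_le_of_forall_eval_indicator_eq hstrict hm hX hZ hXm hZm h).antisymm
    (ae_le_of_forall_eval_indicator_eq hstrict hm hZ hX hZm hXm fun A hA => (h A hA).symm)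

theorem tendsto_eval_of_lipschitz {ι : Type*} {l : Filter ι} {C : ℝ}
    (hLip : ∀ X X' : Ω → ℝ, MemLp X 2 μ → MemLp X' 2 μ →
      |𝓔 X - 𝓔 X'| ≤ C * (eLpNorm (fun ω => X ω - X' ω) 2 μ).toReal)
    {X : ι → Ω → ℝ} {X₀ : Ω → ℝ} (hX : ∀ i, MemLp (X i) 2 μ) (hX₀ : MemLp X₀ 2 μ)
    (hconv : Tendsto (fun i => eLpNorm (fun ω => X i ω - X₀ ω) 2 μ) l (nhds 0)) :
    Tendsto (fun i => 𝓔 (X i)) l (nhds (𝓔 X₀)) := by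
  have hbound : Tendsto (fun i => C * (eLpNorm (fun ω => X i ω - X₀ ω) 2 μ).toReal) l
      (nhds 0) := by
    simpa using ((ENNReal.tendsto_toReal ENNReal.zero_ne_top).comp hconv).const_mul C
  exact tendsto_iff_dist_tendsto_zero.2
    (squeeze_zero (fun _ => dist_nonneg) (fun i => hLip _ _ (hX i) hX₀) hbound)

end NonlinearExpectation

theorem tendsto_eLpNorm_indicator_sub {Ω ι : Type*} {m0 : MeasurableSpace Ω} {μ : Measure Ω}
    {l : Filter ι} {p : ENNReal} {X : ι → Ω → ℝ} {X₀ : Ω → ℝ} (A : Set Ω)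
    (hconv : Tendsto (fun i => eLpNorm (fun ω => X i ω - X₀ ω) p μ) l (nhds 0)) :
    Tendsto (fun i => eLpNorm (fun ω => A.indicator (X i) ω - A.indicator X₀ ω) p μ) l
      (nhds 0) := by
  refine tendsto_of_tendsto_of_tendsto_of_le_of_le tendsto_const_nhds hconv
    (fun _ => zero_le) fun i => ?_
  rw [← indicator_sub]
  exact eLpNorm_indicator_le _

theorem eval_indicator_eq_of_martingale {Ω : Type*} {m0 : MeasurableSpace Ω} {ℙ : Measure Ω}
    {T : ℝ} {ℱ : ℝ → MeasurableSpace Ω} (hℱle : ∀ t : ℝ, ℱ t ≤ m0) {𝓔 : (Ω → ℝ) → ℝ}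
    (hmono : ∀ Q Q' : Ω → ℝ, MemLp Q 2 ℙ → MemLp Q' 2 ℙ →
      (∀ᵐ ω ∂ℙ, Q' ω ≤ Q ω) → 𝓔 Q' ≤ 𝓔 Q)
    {condE : (Ω → ℝ) → ℝ → Ω → ℝ}
    (hcondL2 : ∀ Q : Ω → ℝ, MemLp Q 2 ℙ → ∀ t ∈ Set.Icc (0:ℝ) T, MemLp (condE Q t) 2 ℙ)
    (hcondEq : ∀ Q : Ω → ℝ, MemLp Q 2 ℙ → ∀ t ∈ Set.Icc (0:ℝ) T,
      ∀ A : Set Ω, MeasurableSet[ℱ t] A → 𝓔 (A.indicator Q) = 𝓔 (A.indicator (condE Q t)))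
    {Y : ℝ → Ω → ℝ} (hYL2 : ∀ t ∈ Set.Icc (0:ℝ) T, MemLp (Y t) 2 ℙ)
    (hYmart : ∀ s t : ℝ, 0 ≤ s → s ≤ t → t ≤ T → Y s =ᵐ[ℙ] condE (Y t) s)
    {t u : ℝ} (ht : 0 ≤ t) (htu : t ≤ u) (hu : u ≤ T) {A : Set Ω} (hA : MeasurableSet[ℱ t] A) :
    𝓔 (A.indicator (Y u)) = 𝓔 (A.indicator (Y t)) := by
  have htIcc : t ∈ Set.Icc (0:ℝ) T := ⟨ht, htu.trans hu⟩
  have hYu : MemLp (Y u) 2 ℙ := hYL2 u ⟨ht.trans htu, hu⟩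
  have hind : A.indicator (condE (Y u) t) =ᵐ[ℙ] A.indicator (Y t) :=
    (hYmart t u ht htu hu).mono fun ω hω => by simp only [indicator, hω]
  rw [hcondEq (Y u) hYu t htIcc A hA]
  exact eq_of_ae_eq_of_monotone hmono ((hcondL2 _ hYu t htIcc).indicator (hℱle t A hA))
    ((hYL2 t htIcc).indicator (hℱle t A hA)) hind

theorem stmt13_general
    {Ω : Type*} {m0 : MeasurableSpace Ω} (ℙ : Measure Ω)
    (T : ℝ)
    (ℱ : ℝ → MeasurableSpace Ω)
    (hℱle : ∀ t : ℝ, ℱ t ≤ m0)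
    (𝓔 : (Ω → ℝ) → ℝ)
    -- strict monotonicity
    (hmono : ∀ Q Q' : Ω → ℝ, MemLp Q 2 ℙ → MemLp Q' 2 ℙ →
      (∀ᵐ ω ∂ℙ, Q' ω ≤ Q ω) → 𝓔 Q' ≤ 𝓔 Q)
    (hstrict : ∀ Q Q' : Ω → ℝ, MemLp Q 2 ℙ → MemLp Q' 2 ℙ →
      (∀ᵐ ω ∂ℙ, Q' ω ≤ Q ω) → 𝓔 Q = 𝓔 Q' → Q =ᵐ[ℙ] Q')
    -- the conditional 𝓕-expectation `condE Q t = 𝓔(Q|𝓕_t)` and its defining properties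
    (condE : (Ω → ℝ) → ℝ → Ω → ℝ)
    (hcondL2 : ∀ Q : Ω → ℝ, MemLp Q 2 ℙ → ∀ t ∈ Set.Icc (0:ℝ) T, MemLp (condE Q t) 2 ℙ)
    (hcondEq : ∀ Q : Ω → ℝ, MemLp Q 2 ℙ → ∀ t ∈ Set.Icc (0:ℝ) T,
      ∀ A : Set Ω, MeasurableSet[ℱ t] A → 𝓔 (A.indicator Q) = 𝓔 (A.indicator (condE Q t)))
    -- 𝓔 is L²-Lipschitz
    (C : ℝ)
    (hLip : ∀ X X' : Ω → ℝ, MemLp X 2 ℙ → MemLp X' 2 ℙ →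
      |𝓔 X - 𝓔 X'| ≤ C * (eLpNorm (fun ω => X ω - X' ω) 2 ℙ).toReal)
    -- Y is an 𝓔-martingale (adapted, in S², with Y_t ∈ L²(𝓕_t))
    (Y : ℝ → Ω → ℝ)
    (hYadapt : ∀ t ∈ Set.Icc (0:ℝ) T, Measurable[ℱ t] (Y t))
    (hYL2 : ∀ t ∈ Set.Icc (0:ℝ) T, MemLp (Y t) 2 ℙ)
    (hYmart : ∀ s t : ℝ, 0 ≤ s → s ≤ t → t ≤ T → Y s =ᵐ[ℙ] condE (Y t) s)
    -- the statement
    (t : ℝ) (ht : t ∈ Set.Ico (0:ℝ) T)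
    (s : ℕ → ℝ) (hs : ∀ n, s n ∈ Set.Ioc t T)
    (W : Ω → ℝ) (hW : MemLp W 2 ℙ) (hWm : Measurable[ℱ t] W)
    (hL2conv : Tendsto (fun n => eLpNorm (fun ω => Y (s n) ω - W ω) 2 ℙ) atTop (nhds 0)) :
    W =ᵐ[ℙ] Y t := by
  have htIcc : t ∈ Set.Icc (0:ℝ) T := ⟨ht.1, ht.2.le⟩
  have hYs : ∀ n, MemLp (Y (s n)) 2 ℙ := fun n => hYL2 _ ⟨ht.1.trans (hs n).1.le, (hs n).2⟩
  refine ae_eq_of_forall_eval_indicator_eq hstrict (hℱle t) hW (hYL2 t htIcc) hWm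
    (hYadapt t htIcc) fun A hA => ?_
  have hlim : Tendsto (fun n => 𝓔 (A.indicator (Y (s n)))) atTop (nhds (𝓔 (A.indicator W))) :=
    tendsto_eval_of_lipschitz hLip (fun n => (hYs n).indicator (hℱle t A hA))
      (hW.indicator (hℱle t A hA)) (tendsto_eLpNorm_indicator_sub A hL2conv)
  have heval_const : ∀ n, 𝓔 (A.indicator (Y (s n))) = 𝓔 (A.indicator (Y t)) := fun n =>
    eval_indicator_eq_of_martingale hℱle hmono hcondL2 hcondEq hYL2 hYmart ht.1 (hs n).1.le
      (hs n).2 hA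
  simp only [heval_const] at hlim
  exact tendsto_nhds_unique hlim tendsto_const_nhds

/-- Identification step for the càdlàg modification of an 𝓔-martingale: if 𝓔 is
L²-Lipschitz, `Y` is an 𝓔-martingale, `sₙ ↓ t` in `(t,T]` and `Y_{sₙ} → W` in L²
with `W` being 𝓕_t-measurable, then `W = Y_t` ℙ-a.s. -/
theorem stmt13
    {Ω : Type*} {m0 : MeasurableSpace Ω} (ℙ : Measure Ω) [IsProbabilityMeasure ℙ]
    (T : ℝ) (hT : 0 < T)
    (ℱ : ℝ → MeasurableSpace Ω)
    (hℱmono : ∀ s t : ℝ, s ≤ t → ℱ s ≤ ℱ t)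
    (hℱle : ∀ t : ℝ, ℱ t ≤ m0)
    (𝓔 : (Ω → ℝ) → ℝ)
    -- strict monotonicity
    (hmono : ∀ Q Q' : Ω → ℝ, MemLp Q 2 ℙ → MemLp Q' 2 ℙ →
      (∀ᵐ ω ∂ℙ, Q' ω ≤ Q ω) → 𝓔 Q' ≤ 𝓔 Q)
    (hstrict : ∀ Q Q' : Ω → ℝ, MemLp Q 2 ℙ → MemLp Q' 2 ℙ →
      (∀ᵐ ω ∂ℙ, Q' ω ≤ Q ω) → 𝓔 Q = 𝓔 Q' → Q =ᵐ[ℙ] Q')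
    -- preservation of constants
    (hconst : ∀ c : ℝ, 𝓔 (fun _ => c) = c)
    -- the conditional 𝓕-expectation `condE Q t = 𝓔(Q|𝓕_t)` and its defining properties
    (condE : (Ω → ℝ) → ℝ → Ω → ℝ)
    (hcondL2 : ∀ Q : Ω → ℝ, MemLp Q 2 ℙ → ∀ t ∈ Set.Icc (0:ℝ) T, MemLp (condE Q t) 2 ℙ)
    (hcondMeas : ∀ Q : Ω → ℝ, MemLp Q 2 ℙ → ∀ t ∈ Set.Icc (0:ℝ) T,
      Measurable[ℱ t] (condE Q t))
    (hcondEq : ∀ Q : Ω → ℝ, MemLp Q 2 ℙ → ∀ t ∈ Set.Icc (0:ℝ) T,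
      ∀ A : Set Ω, MeasurableSet[ℱ t] A → 𝓔 (A.indicator Q) = 𝓔 (A.indicator (condE Q t)))
    -- 𝓔 is L²-Lipschitz
    (C : ℝ) (hC : 0 ≤ C)
    (hLip : ∀ X X' : Ω → ℝ, MemLp X 2 ℙ → MemLp X' 2 ℙ →
      |𝓔 X - 𝓔 X'| ≤ C * (eLpNorm (fun ω => X ω - X' ω) 2 ℙ).toReal)
    -- Y is an 𝓔-martingale (adapted, in S², with Y_t ∈ L²(𝓕_t))
    (Y : ℝ → Ω → ℝ)
    (hYadapt : ∀ t ∈ Set.Icc (0:ℝ) T, Measurable[ℱ t] (Y t))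
    (hYL2 : ∀ t ∈ Set.Icc (0:ℝ) T, MemLp (Y t) 2 ℙ)
    (hYS2 : Integrable (fun ω => ⨆ t : Set.Icc (0:ℝ) T, (Y (t : ℝ) ω) ^ 2) ℙ)
    (hYmart : ∀ s t : ℝ, 0 ≤ s → s ≤ t → t ≤ T → Y s =ᵐ[ℙ] condE (Y t) s)
    -- the statement
    (t : ℝ) (ht : t ∈ Set.Ico (0:ℝ) T)
    (s : ℕ → ℝ) (hs : ∀ n, s n ∈ Set.Ioc t T)
    (hstend : Tendsto s atTop (nhds t))
    (W : Ω → ℝ) (hW : MemLp W 2 ℙ) (hWm : Measurable[ℱ t] W)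
    (hL2conv : Tendsto (fun n => eLpNorm (fun ω => Y (s n) ω - W ω) 2 ℙ) atTop (nhds 0)) :
    W =ᵐ[ℙ] Y t :=
  stmt13_general ℙ T ℱ hℱle 𝓔 hmono hstrict condE hcondL2 hcondEq C hLip Y hYadapt hYL2 hYmart t ht
    s hs W hW hWm hL2conv
end
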